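/- arXiv:2412.05410 — 2 statements merged into one kernel-verified Lean document; each statement's English description precedes it below -/
import Mathlib

section
/- Let ψ : G → ℝ be a nonnegative, normalized, symmetric, conditionally negative definite function on a group G. Then L := √ψ is a length function on G: L(1) = 0, L(g⁻¹) = L(g), and L(gh) ≤ L(g) + L(h) for all g, h ∈ G. -/
theorem sqrt_of_cnd_is_length {G : Type*} [Group G] (ψ : G → ℝ)
    (hpos : ∀ g : G, 0 ≤ ψ g)
    (hnorm : ψ 1 = 0) (hsym : ∀ g : G, ψ g⁻¹ = ψ g)
    (hcnd : ∀ (n : ℕ) (g : Fin n → G) (lam : Fin n → ℝ),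
      (∑ i, lam i) = 0 →
      (∑ i, ∑ j, lam i * lam j * ψ (g i * (g j)⁻¹)) ≤ 0) :
    Real.sqrt (ψ 1) = 0 ∧
      (∀ g : G, Real.sqrt (ψ g⁻¹) = Real.sqrt (ψ g)) ∧
      (∀ g h : G, Real.sqrt (ψ (g * h)) ≤ Real.sqrt (ψ g) + Real.sqrt (ψ h)) := by
  refine ⟨by simp [hnorm], fun g => by rw [hsym], fun g h => ?_⟩
  set a := Real.sqrt (ψ g) with ha_def
  set b := Real.sqrt (ψ h) with hb_def
  have ha : 0 ≤ a := Real.sqrt_nonneg _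
  have hb : 0 ≤ b := Real.sqrt_nonneg _
  have ha2 : a ^ 2 = ψ g := Real.sq_sqrt (hpos g)
  have hb2 : b ^ 2 = ψ h := Real.sq_sqrt (hpos h)
  have key : ∀ s t : ℝ, s * t * ψ (g * h) ≤ s * (s + t) * ψ g + t * (s + t) * ψ h := by
    intro s t
    have H := hcnd 3 ![1, g⁻¹, (g * h)⁻¹] ![s, -(s + t), t] (by
      simp [Fin.sum_univ_three])
    simp only [Fin.sum_univ_three, Matrix.cons_val_zero, Matrix.cons_val_one,
      Matrix.head_cons, Matrix.cons_val_two, Matrix.tail_cons, one_mul, mul_one,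
      inv_inv, inv_one] at H
    rw [show g⁻¹ * g = (1 : G) by group, show g⁻¹ * (g * h) = h by group,
      show (g * h)⁻¹ * g = h⁻¹ by group, show (g * h)⁻¹ * (g * h) = (1 : G) by group,
hnorm] at H
    simp only [hsym] at H
    ring_nf at H ⊢
    linarith [H]
  have h1 : ψ (g * h) ≤ (a + b) ^ 2 := by
    refine le_of_forall_pos_le_add fun ε hε => ?_
    set δ : ℝ := ε / (2 * (a + b) + 1) with hδ_def
    have hδ : 0 < δ := by positivity
    have hmul : δ * (2 * (a + b) + 1) = ε := div_mul_cancel₀ _ (by positivity)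
    have hδε : 2 * δ * (a + b) ≤ ε := by nlinarith [hδ.le]
    have K := key (b + δ) (a + δ)
    have h2 : ψ (g * h) ≤ (a + b) ^ 2 + 2 * δ * (a + b) := by
      have hst : 0 < (b + δ) * (a + δ) := by positivity
      rw [← ha2, ← hb2] at K
      nlinarith [K, mul_nonneg (mul_nonneg (mul_nonneg ha ha) hb) hδ.le,
        mul_nonneg (mul_nonneg (mul_nonneg ha hb) hb) hδ.le,
        mul_nonneg (mul_nonneg (mul_nonneg ha hb) hδ.le) hδ.le,
        mul_nonneg (mul_nonneg (mul_nonneg ha ha) hδ.le) hδ.le,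
        mul_nonneg (mul_nonneg (mul_nonneg hb hb) hδ.le) hδ.le,
        mul_nonneg (mul_nonneg (mul_nonneg ha hδ.le) hδ.le) hδ.le,
        mul_nonneg (mul_nonneg (mul_nonneg hb hδ.le) hδ.le) hδ.le]
    linarith
  calc Real.sqrt (ψ (g * h)) ≤ Real.sqrt ((a + b) ^ 2) := Real.sqrt_le_sqrt h1
    _ = a + b := by rw [Real.sqrt_sq (by positivity)]
end

section
/- Let ψ : G → ℝ be a nonnegative, normalized, symmetric, conditionally negative definite function on a group G. Then for all g, h ∈ G: (ψ(g) + ψ(h) − ψ(gh⁻¹))² ≤ 4 ψ(g) ψ(h). -/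
theorem cnd_cauchy_schwarz {G : Type*} [Group G] (ψ : G → ℝ)
    (hpos : ∀ g : G, 0 ≤ ψ g)
    (hnorm : ψ 1 = 0) (hsym : ∀ g : G, ψ g⁻¹ = ψ g)
    (hcnd : ∀ (n : ℕ) (g : Fin n → G) (lam : Fin n → ℝ),
      (∑ i, lam i) = 0 →
      (∑ i, ∑ j, lam i * lam j * ψ (g i * (g j)⁻¹)) ≤ 0) :
    ∀ g h : G, (ψ g + ψ h - ψ (g * h⁻¹)) ^ 2 ≤ 4 * (ψ g * ψ h) := by
  intro g h
  have key : ∀ x : ℝ, 0 ≤ ψ g * (x * x) + (ψ g + ψ h - ψ (g * h⁻¹)) * x + ψ h := by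
    intro x
    have := hcnd 3 ![g, h, 1] ![x, 1, -x - 1] (by
      simp [Fin.sum_univ_three])
    simp only [Fin.sum_univ_three, Matrix.cons_val_zero, Matrix.cons_val_one,
      Matrix.head_cons, Matrix.cons_val_two, Matrix.tail_cons] at this
    have hgg : ψ (g * g⁻¹) = 0 := by simp [hnorm]
    have hhh : ψ (h * h⁻¹) = 0 := by simp [hnorm]
    have h11 : ψ ((1 : G) * (1 : G)⁻¹) = 0 := by simp [hnorm]
    have hhg : ψ (h * g⁻¹) = ψ (g * h⁻¹) := by
      rw [← hsym (h * g⁻¹)]; simp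
    have hg1 : ψ (g * (1 : G)⁻¹) = ψ g := by simp
    have h1g : ψ ((1 : G) * g⁻¹) = ψ g := by rw [← hsym g]; simp
    have hh1 : ψ (h * (1 : G)⁻¹) = ψ h := by simp
    have h1h : ψ ((1 : G) * h⁻¹) = ψ h := by rw [← hsym h]; simp
    rw [hgg, hhh, h11, hhg, hg1, h1g, hh1, h1h] at this
    nlinarith [this]
  have hd := discrim_le_zero key
  rw [discrim] at hd
  nlinarith [hd]
end
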